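/- Fix n ≥ 1 and set b = ⌊log₂ n⌋ + 2. In ℤ[X₀, …, X_{b−1}], let I′ be the ideal generated by Xᵢ² − (−2·Xᵢ + X_{i+1}) for 0 ≤ i ≤ b−2 together with X_{b−1}². If g is a multilinear polynomial with (1 + X₀)ⁿ − g ∈ I′, then every coefficient of g is 0 or 1. -/

import Mathlib

open MvPolynomial

/-- The generators of the ideal `I′`: `Xᵢ² − (−2Xᵢ + X_{i+1})` for `i ≤ b-2`, and `X_{b-1}²`. -/
noncomputable def gens' (b : ℕ) : Fin b → MvPolynomial (Fin b) ℤ := fun i =>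
  if h : (i : ℕ) + 1 < b then X i ^ 2 - (-2 * X i + X ⟨(i : ℕ) + 1, h⟩) else X i ^ 2

/-!
Substituting `Xᵢ ↦ qᵢ := (1 + t)^(2^i) - 1` kills every generator `Xᵢ² + 2Xᵢ - X_{i+1}`, since
`(1 + qᵢ)² = 1 + q_{i+1}`, and sends `X_{b-1}²` to `q_{b-1}²`, of degree `2^b`. A multilinear
monomial `X^m` goes to a monic polynomial of degree `∑ mᵢ 2^i`; by uniqueness of binary expansions
these degrees are distinct and below `2^b`, so the substitution is injective on multilinear
polynomials and keeps their degree below `2^b`. Hence the image of `g`, congruent to `(1 + t)^n`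
modulo `q_{b-1}²`, is `(1 + t)^n` itself, because `n < 2^(b-1)`. So is the image of the multilinear
polynomial `∏_{i ∈ bits n} (1 + Xᵢ)`, whose coefficients are `0` or `1`; therefore `g` equals it.
-/

open scoped Polynomial

theorem Polynomial.linearIndepOn_of_monic_of_injOn_natDegree {R ι : Type*} [Ring R]
    {P : ι → R[X]} {s : Finset ι} (hmonic : ∀ i ∈ s, (P i).Monic)
    (hinj : Set.InjOn (fun i ↦ (P i).natDegree) s) : LinearIndepOn R P s := by
  classical
  rw [linearIndepOn_finset_iff]
  induction s using Finset.induction_on_max_value (fun i ↦ (P i).natDegree) with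
  | empty => simp
  | insert a s has hmax ih =>
    intro c hc
    have hlt : ∀ i ∈ s, (P i).natDegree < (P a).natDegree := fun i hi ↦
      (hmax i hi).lt_of_ne fun h ↦ has <|
        hinj (Finset.mem_insert_of_mem hi) (Finset.mem_insert_self a s) h ▸ hi
    rw [Finset.sum_insert has] at hc
    have hca : c a = 0 := by
      have hcoeff := congrArg (Polynomial.coeff · (P a).natDegree) hc
      simp only [Polynomial.coeff_add, Polynomial.finsetSum_coeff, Polynomial.coeff_smul,
        smul_eq_mul, (hmonic a (Finset.mem_insert_self a s)).coeff_natDegree, mul_one,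
        Polynomial.coeff_zero] at hcoeff
      rwa [Finset.sum_eq_zero fun i hi ↦ by
        rw [Polynomial.coeff_eq_zero_of_natDegree_lt (hlt i hi), mul_zero], add_zero] at hcoeff
    rw [hca, zero_smul, zero_add] at hc
    intro i hi
    rcases Finset.mem_insert.mp hi with rfl | hi
    · exact hca
    · exact ih (fun j hj ↦ hmonic j (Finset.mem_insert_of_mem hj))
        (hinj.mono (by simp)) c hc i hi

section BitPoly

variable (R : Type*) [CommRing R]

noncomputable def bitPoly (k : ℕ) : R[X] := (Polynomial.X + 1) ^ 2 ^ k - 1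

variable {R}

theorem one_add_bitPoly (k : ℕ) : 1 + bitPoly R k = (Polynomial.X + 1) ^ 2 ^ k :=
  add_sub_cancel _ _

theorem bitPoly_succ (k : ℕ) : bitPoly R (k + 1) = bitPoly R k ^ 2 + 2 * bitPoly R k := by
  simp only [bitPoly, pow_succ, pow_mul]
  ring

variable [Nontrivial R]

theorem natDegree_bitPoly (k : ℕ) : (bitPoly R k).natDegree = 2 ^ k := by
  rw [bitPoly, ← Polynomial.C_1, Polynomial.natDegree_sub_C, Polynomial.natDegree_pow_X_add_C]

theorem monic_bitPoly (k : ℕ) : (bitPoly R k).Monic := by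
  have hmonic : ((Polynomial.X + 1 : R[X]) ^ 2 ^ k).Monic := by
    simpa using (Polynomial.monic_X_add_C (1 : R)).pow (2 ^ k)
  refine hmonic.sub_of_left ?_
  rw [Polynomial.degree_one, ← Polynomial.natDegree_pos_iff_degree_pos, ← Polynomial.C_1,
    Polynomial.natDegree_pow_X_add_C]
  positivity

end BitPoly

theorem eq_of_bitPoly_sq_dvd_sub {R : Type*} [CommRing R] [IsDomain R] {k : ℕ} {f h : R[X]}
    (hf : f.natDegree < 2 ^ (k + 1)) (hh : h.natDegree < 2 ^ (k + 1))
    (hdvd : bitPoly R k ^ 2 ∣ f - h) : f = h := by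
  refine sub_eq_zero.mp (Polynomial.eq_zero_of_dvd_of_natDegree_lt hdvd ?_)
  calc (f - h).natDegree ≤ max f.natDegree h.natDegree := Polynomial.natDegree_sub_le _ _
    _ < 2 ^ (k + 1) := max_lt hf hh
    _ = (bitPoly R k ^ 2).natDegree := by
      rw [(monic_bitPoly k).natDegree_pow, natDegree_bitPoly, pow_succ']

section BinaryWeight

variable {b : ℕ}

theorem sum_mul_two_pow_eq_sum_map_support {m : Fin b →₀ ℕ} (hm : ∀ i, m i ≤ 1) :
    ∑ i, m i * 2 ^ (i : ℕ) = ∑ k ∈ m.support.map Fin.valEmbedding, 2 ^ k := by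
  rw [Finset.sum_map, ← Finset.sum_subset (Finset.subset_univ m.support)]
  · refine Finset.sum_congr rfl fun i hi ↦ ?_
    rw [le_antisymm (hm i) (Nat.one_le_iff_ne_zero.mpr (Finsupp.mem_support_iff.mp hi)), one_mul]
    rfl
  · intro i _ hi
    rw [Finsupp.notMem_support_iff.mp hi, zero_mul]

theorem sum_mul_two_pow_lt {m : Fin b →₀ ℕ} (hm : ∀ i, m i ≤ 1) :
    ∑ i, m i * 2 ^ (i : ℕ) < 2 ^ b := by
  rw [sum_mul_two_pow_eq_sum_map_support hm]
  refine Nat.geomSum_lt le_rfl fun k hk ↦ ?_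
  obtain ⟨i, -, rfl⟩ := Finset.mem_map.mp hk
  exact i.isLt

theorem injOn_sum_mul_two_pow :
    Set.InjOn (fun m : Fin b →₀ ℕ ↦ ∑ i, m i * 2 ^ (i : ℕ)) {m | ∀ i, m i ≤ 1} := by
  intro m hm m' hm' h
  simp only [sum_mul_two_pow_eq_sum_map_support hm, sum_mul_two_pow_eq_sum_map_support hm'] at h
  have hsupp := Finset.map_injective Fin.valEmbedding (Finset.geomSum_injective le_rfl h)
  ext i
  have hmi := hm i
  have hm'i := hm' i
  have hiff := congrArg (i ∈ ·) hsupp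
  simp only [Finsupp.mem_support_iff, eq_iff_iff] at hiff
  omega

theorem exists_finset_sum_two_pow_eq {n : ℕ} (hn : n < 2 ^ b) :
    ∃ T : Finset (Fin b), ∑ i ∈ T, 2 ^ (i : ℕ) = n := by
  have hlt : ∀ k ∈ n.bitIndices.toFinset, k < b := fun k hk ↦
    (Nat.pow_lt_pow_iff_right one_lt_two).mp <|
      (Nat.two_pow_le_of_mem_bitIndices (List.mem_toFinset.mp hk)).trans_lt hn
  refine ⟨n.bitIndices.toFinset.attachFin hlt, ?_⟩
  calc ∑ i ∈ n.bitIndices.toFinset.attachFin hlt, 2 ^ (i : ℕ)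
      = ∑ k ∈ (n.bitIndices.toFinset.attachFin hlt).map Fin.valEmbedding, 2 ^ k :=
        by rw [Finset.sum_map]; rfl
    _ = n := by rw [Finset.map_valEmbedding_attachFin, Finset.sum_toFinset_bitIndices_two_pow]

end BinaryWeight

section BitEval

variable (R : Type*) [CommRing R] (b : ℕ)

noncomputable def bitEval : MvPolynomial (Fin b) R →ₐ[R] R[X] :=
  aeval fun i ↦ bitPoly R i

variable {R b}

theorem bitEval_X (i : Fin b) : bitEval R b (X i) = bitPoly R i :=
  aeval_X _ _

theorem bitEval_one_add_X (i : Fin b) :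
    bitEval R b (1 + X i) = (Polynomial.X + 1) ^ 2 ^ (i : ℕ) := by
  rw [map_add, map_one, bitEval_X, one_add_bitPoly]

theorem bitEval_monomial (m : Fin b →₀ ℕ) (c : R) :
    bitEval R b (monomial m c) = c • ∏ i : Fin b, bitPoly R i ^ m i := by
  rw [bitEval, aeval_monomial, Finsupp.prod_fintype _ _ fun _ ↦ pow_zero _, Algebra.smul_def]

theorem bitEval_eq_sum (p : MvPolynomial (Fin b) R) :
    bitEval R b p = ∑ m ∈ p.support, p.coeff m • ∏ i : Fin b, bitPoly R i ^ m i := by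
  conv_lhs => rw [p.as_sum, map_sum]
  simp only [bitEval_monomial]

variable [Nontrivial R]

theorem monic_prod_bitPoly_pow (m : Fin b →₀ ℕ) : (∏ i : Fin b, bitPoly R i ^ m i).Monic :=
  Polynomial.monic_prod_of_monic _ _ fun i _ ↦ (monic_bitPoly i).pow _

theorem natDegree_prod_bitPoly_pow (m : Fin b →₀ ℕ) :
    (∏ i : Fin b, bitPoly R i ^ m i).natDegree = ∑ i, m i * 2 ^ (i : ℕ) := by
  rw [Polynomial.natDegree_prod_of_monic _ _ fun (i : Fin b) _ ↦ (monic_bitPoly (R := R) i).pow _]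
  exact Finset.sum_congr rfl fun i _ ↦ by
    rw [(monic_bitPoly _).natDegree_pow, natDegree_bitPoly]

theorem natDegree_bitEval_lt {p : MvPolynomial (Fin b) R} (hp : p ∈ restrictDegree (Fin b) R 1) :
    (bitEval R b p).natDegree < 2 ^ b := by
  rw [mem_restrictDegree] at hp
  rw [bitEval_eq_sum, Nat.lt_iff_le_pred (Nat.two_pow_pos b)]
  refine Polynomial.natDegree_sum_le_of_forall_le _ _ fun m hm ↦ ?_
  refine (Polynomial.natDegree_smul_le _ _).trans ?_
  rw [natDegree_prod_bitPoly_pow]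
  exact Nat.le_pred_of_lt (sum_mul_two_pow_lt (hp m hm))

theorem eq_zero_of_bitEval_eq_zero {p : MvPolynomial (Fin b) R}
    (hp : p ∈ restrictDegree (Fin b) R 1) (h : bitEval R b p = 0) : p = 0 := by
  rw [mem_restrictDegree] at hp
  have hindep : LinearIndepOn R (fun m : Fin b →₀ ℕ ↦ ∏ i : Fin b, bitPoly R i ^ m i) p.support :=
    Polynomial.linearIndepOn_of_monic_of_injOn_natDegree (fun m _ ↦ monic_prod_bitPoly_pow m)
      fun m hm m' hm' hmm' ↦ injOn_sum_mul_two_pow (hp m hm) (hp m' hm') <| by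
        simpa only [natDegree_prod_bitPoly_pow] using hmm'
  ext m
  by_contra hm
  exact hm (linearIndepOn_finset_iff.mp hindep _ (bitEval_eq_sum p ▸ h) m
    (mem_support_iff.mpr hm))

end BitEval

theorem bitPoly_sq_dvd_bitEval_gens' {b : ℕ} (i : Fin b) :
    bitPoly ℤ (b - 1) ^ 2 ∣ bitEval ℤ b (gens' b i) := by
  unfold gens'
  split_ifs with hi
  · have hzero : bitEval ℤ b (X i ^ 2 - (-2 * X i + X ⟨(i : ℕ) + 1, hi⟩)) = 0 := by
      simp only [map_sub, map_add, map_mul, map_pow, map_neg, map_ofNat, bitEval_X, bitPoly_succ]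
      ring
    rw [hzero]
    exact dvd_zero _
  · rw [map_pow, bitEval_X, show (i : ℕ) = b - 1 by omega]

theorem bitPoly_sq_dvd_bitEval_of_mem_span {b : ℕ} {p : MvPolynomial (Fin b) ℤ}
    (hp : p ∈ Ideal.span (Set.range (gens' b))) : bitPoly ℤ (b - 1) ^ 2 ∣ bitEval ℤ b p := by
  have hle : Ideal.span (Set.range (gens' b)) ≤
      (Ideal.span {bitPoly ℤ (b - 1) ^ 2}).comap (bitEval ℤ b) :=
    Ideal.span_le.mpr <| Set.range_subset_iff.mpr fun i ↦
      Ideal.mem_span_singleton.mpr (bitPoly_sq_dvd_bitEval_gens' i)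
  exact Ideal.mem_span_singleton.mp (hle hp)

section ProdOneAddX

variable {σ R : Type*} [CommSemiring R]

theorem Finsupp.indicator_one_injective :
    Function.Injective fun t : Finset σ ↦ Finsupp.indicator t fun _ _ ↦ (1 : ℕ) := by
  classical
  intro t t' h
  ext i
  have hi := congrArg (· i) h
  simp only [Finsupp.indicator_apply] at hi
  split_ifs at hi <;> simp_all

open scoped Finset in
theorem coeff_prod_one_add_X [DecidableEq σ] (T : Finset σ) (m : σ →₀ ℕ) :
    coeff m (∏ i ∈ T, (1 + X i) : MvPolynomial σ R) =
      #{t ∈ T.powerset | m = Finsupp.indicator t fun _ _ ↦ 1} := by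
  rw [Finset.prod_one_add, coeff_sum, ← Finset.sum_boole]
  refine Finset.sum_congr rfl fun t _ ↦ ?_
  simpa using coeff_prod_X_pow (R := R) m (fun _ ↦ 1) t

theorem coeff_prod_one_add_X_eq_zero_or_eq_one (T : Finset σ) (m : σ →₀ ℕ) :
    coeff m (∏ i ∈ T, (1 + X i) : MvPolynomial σ R) = 0 ∨
      coeff m (∏ i ∈ T, (1 + X i) : MvPolynomial σ R) = 1 := by
  classical
  rw [coeff_prod_one_add_X]
  have hcard : (T.powerset.filter fun t ↦ m = Finsupp.indicator t fun _ _ ↦ 1).card ≤ 1 :=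
    Finset.card_le_one.mpr fun t ht t' ht' ↦ Finsupp.indicator_one_injective <|
      (Finset.mem_filter.mp ht).2.symm.trans (Finset.mem_filter.mp ht').2
  rcases Nat.le_one_iff_eq_zero_or_eq_one.mp hcard with h | h <;> simp [h]

theorem prod_one_add_X_mem_restrictDegree (T : Finset σ) :
    (∏ i ∈ T, (1 + X i) : MvPolynomial σ R) ∈ restrictDegree σ R 1 := by
  classical
  rw [mem_restrictDegree]
  intro m hm i
  rw [mem_support_iff, coeff_prod_one_add_X] at hm
  obtain ⟨t, ht⟩ := Finset.card_ne_zero.mp fun h ↦ hm (by rw [h, Nat.cast_zero])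
  rw [(Finset.mem_filter.mp ht).2, Finsupp.indicator_apply]
  split_ifs <;> simp

end ProdOneAddX

theorem stmt7 (n : ℕ) (b : ℕ) (hb : b = Nat.log 2 n + 2)
    (g : MvPolynomial (Fin b) ℤ)
    (hml : ∀ m ∈ g.support, ∀ i : Fin b, m i ≤ 1)
    (hg : (1 + X (⟨0, by omega⟩ : Fin b)) ^ n - g ∈ Ideal.span (Set.range (gens' b))) :
    ∀ m : Fin b →₀ ℕ, g.coeff m = 0 ∨ g.coeff m = 1 := by
  have hb1 : b - 1 + 1 = b := by omega
  have hn : n < 2 ^ (b - 1) := by simpa [hb] using Nat.lt_pow_succ_log_self one_lt_two n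
  have hn' : n < 2 ^ b := hn.trans (Nat.pow_lt_pow_right one_lt_two (by omega))
  have hg_mem : g ∈ restrictDegree (Fin b) ℤ 1 := by rwa [mem_restrictDegree]
  have hbitEval_g : bitEval ℤ b g = (Polynomial.X + 1) ^ n := by
    have hdvd := bitPoly_sq_dvd_bitEval_of_mem_span hg
    rw [map_sub, map_pow, bitEval_one_add_X, Fin.val_mk, pow_zero, pow_one] at hdvd
    refine (eq_of_bitPoly_sq_dvd_sub ?_ ?_ hdvd).symm
    · rwa [← Polynomial.C_1, Polynomial.natDegree_pow_X_add_C, hb1]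
    · rw [hb1]
      exact natDegree_bitEval_lt hg_mem
  obtain ⟨T, hT⟩ := exists_finset_sum_two_pow_eq hn'
  have hgT : g = ∏ i ∈ T, (1 + X i) := by
    refine sub_eq_zero.mp (eq_zero_of_bitEval_eq_zero
      (sub_mem hg_mem (prod_one_add_X_mem_restrictDegree T)) ?_)
    rw [map_sub, map_prod, Finset.prod_congr rfl fun i _ ↦ bitEval_one_add_X i,
      Finset.prod_pow_eq_pow_sum, hT, hbitEval_g, sub_self]
  intro m
  rw [hgT]
  exact coeff_prod_one_add_X_eq_zero_or_eq_one T m
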